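/- arXiv:2503.05296 — 4 statements merged into one kernel-verified Lean document; each statement's English description precedes it below -/
import Mathlib

section
/- Let n ≥ 3. Then Q_{A(ℤ[i],n)} ≥ 4n − 10: for every ε > 0 and every real bound B there exist Gaussian integers a₁, …, aₙ, all nonzero, such that (Z) a₁ + … + aₙ = 0; (S1) there is no vector (b₁,…,bₙ) ∈ {0,1}ⁿ with bᵢ = 0 for some i and bⱼ = 1 for some j and b₁a₁ + … + bₙaₙ = 0; (G1) there exist u₁,…,uₙ ∈ ℤ[i] with u₁a₁ + … + uₙaₙ = 1; and moreover max(N(a₁),…,N(aₙ)) > B and log(max(N(a₁),…,N(aₙ))) ≥ (4n − 10 − ε) · log(rad(N(a₁·…·aₙ))). -/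
/-- The radical of a natural number: the product of its distinct prime factors. -/
def rad (m : ℕ) : ℕ := ∏ p ∈ m.primeFactors, p

/-- The norm of a Gaussian integer `z = a + b i` as a natural number, `N(z) = a² + b²`. -/
def gNorm (z : GaussianInt) : ℕ := (Zsqrtd.norm z).natAbs

/-!
Put `y = 2 ^ k` and `t = y ^ 2 - y`. Since `y` and `1 - y` are the roots of `Z ^ 2 - Z - t`, the
power sums `s_n = y ^ n + (1 - y) ^ n` satisfy `s_(n+2) = s_(n+1) + t * s_n`, so `s_n` is a
polynomial in `t` with positive integer coefficients `v_j` (`j ≤ n / 2`, `v_0 = 1` for `n ≥ 1`).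
For `n = 2m + 1` this gives the `m + 3` term zero sum
`v_0 + v_1 t + ⋯ + v_m t ^ m + (y - 1) ^ (2m+1) - y ^ (2m+1) = 0`.
All terms but the last are positive, so no proper subsum vanishes, and the first term is `1`.
The largest norm is at least `y ^ (2(2m+1)) = 2 ^ (k(4m+2))`, whereas every term divides
`C * (y(y-1)) ^ (2m+1)` with `C = v_0 ⋯ v_m`, so the radical of the product is at most
`2C * 2 ^ k`. Letting `k → ∞` the quality tends to `4m + 2 = 4n - 10`.
-/

open Polynomial Finset Filter UniqueFactorizationMonoid

/-- The Lucas sequence `V_n(1, -X)`. -/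
noncomputable def lucasPoly : ℕ → ℕ[X]
  | 0 => 2
  | 1 => 1
  | n + 2 => lucasPoly (n + 1) + X * lucasPoly n

theorem aeval_lucasPoly {R : Type*} [CommRing R] (y : R) (n : ℕ) :
    aeval (y ^ 2 - y) (lucasPoly n) = y ^ n + (1 - y) ^ n := by
  induction n using Nat.twoStepInduction with
  | zero => simp [lucasPoly, map_ofNat, one_add_one_eq_two]
  | one => simp [lucasPoly]
  | more n ih₀ ih₁ =>
    rw [lucasPoly, map_add, map_mul, aeval_X, ih₀, ih₁]
    ring

theorem coeff_lucasPoly_zero {n : ℕ} (hn : n ≠ 0) : (lucasPoly n).coeff 0 = 1 := by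
  induction n using Nat.twoStepInduction with
  | zero => exact absurd rfl hn
  | one => simp [lucasPoly]
  | more n _ ih₁ => simp [lucasPoly, ih₁]

theorem coeff_lucasPoly_eq_zero {n j : ℕ} (h : n < 2 * j) : (lucasPoly n).coeff j = 0 := by
  induction n using Nat.twoStepInduction generalizing j with
  | zero =>
    obtain ⟨j, rfl⟩ := Nat.exists_eq_add_one.2 (by omega : 0 < j)
    simp [lucasPoly]
  | one =>
    obtain ⟨j, rfl⟩ := Nat.exists_eq_add_one.2 (by omega : 0 < j)
    simp [lucasPoly, coeff_one]
  | more n ih₀ ih₁ =>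
    obtain ⟨j, rfl⟩ := Nat.exists_eq_add_one.2 (by omega : 0 < j)
    rw [lucasPoly, coeff_add, coeff_X_mul, ih₀ (by omega), ih₁ (by omega)]

theorem coeff_lucasPoly_pos {n j : ℕ} (h : 2 * j ≤ n) : 0 < (lucasPoly n).coeff j := by
  induction n using Nat.twoStepInduction generalizing j with
  | zero => simp [show j = 0 by omega, lucasPoly]
  | one => simp [show j = 0 by omega, lucasPoly]
  | more n ih₀ ih₁ =>
    rw [lucasPoly, coeff_add]
    cases j with
    | zero => exact Nat.add_pos_left (ih₁ (by omega)) _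
    | succ j => exact Nat.add_pos_right _ (by rw [coeff_X_mul]; exact ih₀ (by omega))

theorem sum_coeff_lucasPoly_mul_pow {R : Type*} [CommRing R] (y : R) (n : ℕ) :
    ∑ j ∈ range (n / 2 + 1), ((lucasPoly n).coeff j : R) * (y ^ 2 - y) ^ j =
      y ^ n + (1 - y) ^ n := by
  have hdeg : (lucasPoly n).natDegree < n / 2 + 1 :=
    Nat.lt_succ_of_le <| natDegree_le_iff_coeff_eq_zero.2 fun _ _ =>
      coeff_lucasPoly_eq_zero (by omega)
  simp [← aeval_lucasPoly, aeval_eq_sum_range' hdeg, nsmul_eq_mul]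

theorem sum_mul_pos_of_apply_eq_zero {ι R : Type*} [Fintype ι] [Ring R] [LinearOrder R]
    [IsStrictOrderedRing R] {b c : ι → R} {i₀ j : ι} (hc : ∀ i ≠ i₀, 0 < c i)
    (hb : ∀ i, b i = 0 ∨ b i = 1) (hb₀ : b i₀ = 0) (hj : b j = 1) :
    0 < ∑ i, b i * c i := by
  have hj₀ : j ≠ i₀ := by rintro rfl; simp [hb₀] at hj
  refine sum_pos' (fun i _ => ?_) ⟨j, mem_univ j, by simpa [hj] using hc j hj₀⟩
  rcases eq_or_ne i i₀ with rfl | hi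
  · simp [hb₀]
  · rcases hb i with h | h <;> simp [h, (hc i hi).le]

theorem sum_mul_ne_zero_of_sum_eq_zero {ι R : Type*} [Fintype ι] [Ring R] [LinearOrder R]
    [IsStrictOrderedRing R] {b c : ι → R} {i₀ : ι} (hc : ∀ i ≠ i₀, 0 < c i)
    (hsum : ∑ i, c i = 0) (hb : ∀ i, b i = 0 ∨ b i = 1) (h₀ : ∃ i, b i = 0)
    (h₁ : ∃ j, b j = 1) :
    ∑ i, b i * c i ≠ 0 := by
  rcases hb i₀ with hb₀ | hb₀
  · exact (sum_mul_pos_of_apply_eq_zero hc hb hb₀ h₁.choose_spec).ne'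
  · -- the complementary subset has the opposite sum
    obtain ⟨i, hi⟩ := h₀
    have hb' : ∀ i, 1 - b i = 0 ∨ 1 - b i = 1 := fun i => by
      rcases hb i with h | h <;> simp [h]
    have := sum_mul_pos_of_apply_eq_zero (b := fun i => 1 - b i) hc hb' (by simp [hb₀])
      (j := i) (by simp [hi])
    simp only [sub_mul, one_mul, sum_sub_distrib, hsum, zero_sub, neg_pos] at this
    exact this.ne

noncomputable def lucasTuple (m : ℕ) (y : ℤ) : Fin (m + 3) → ℤ :=
  Fin.snoc (α := fun _ => ℤ)
    (Fin.snoc (α := fun _ => ℤ)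
      (fun j : Fin (m + 1) => ((lucasPoly (2 * m + 1)).coeff j : ℤ) * (y ^ 2 - y) ^ (j : ℕ))
      ((y - 1) ^ (2 * m + 1)))
    (-y ^ (2 * m + 1))

theorem lucasTuple_castSucc_castSucc (m : ℕ) (y : ℤ) (j : Fin (m + 1)) :
    lucasTuple m y j.castSucc.castSucc =
      (lucasPoly (2 * m + 1)).coeff j * (y ^ 2 - y) ^ (j : ℕ) := by
  simp [lucasTuple]

theorem lucasTuple_castSucc_last (m : ℕ) (y : ℤ) :
    lucasTuple m y (Fin.last (m + 1)).castSucc = (y - 1) ^ (2 * m + 1) := by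
  simp [lucasTuple]

theorem lucasTuple_last (m : ℕ) (y : ℤ) :
    lucasTuple m y (Fin.last (m + 2)) = -y ^ (2 * m + 1) := by
  simp [lucasTuple]

theorem lucasTuple_zero (m : ℕ) (y : ℤ) : lucasTuple m y 0 = 1 := by
  simpa [coeff_lucasPoly_zero] using lucasTuple_castSucc_castSucc m y 0

theorem sum_lucasTuple (m : ℕ) (y : ℤ) : ∑ i, lucasTuple m y i = 0 := by
  have h := sum_coeff_lucasPoly_mul_pow y (2 * m + 1)
  rw [show (2 * m + 1) / 2 = m by omega, ← Fin.sum_univ_eq_sum_range] at h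
  have hodd : (1 - y) ^ (2 * m + 1) = -(y - 1) ^ (2 * m + 1) := by
    rw [← neg_sub, Odd.neg_pow (odd_two_mul_add_one m)]
  simp only [Fin.sum_univ_castSucc, lucasTuple_castSucc_castSucc, lucasTuple_castSucc_last,
    lucasTuple_last, h, hodd]
  ring

theorem lucasTuple_pos {m : ℕ} {y : ℤ} (hy : 1 < y) (i : Fin (m + 3)) (hi : i ≠ Fin.last _) :
    0 < lucasTuple m y i := by
  obtain ⟨i, rfl⟩ := Fin.exists_castSucc_eq.2 hi
  induction i using Fin.lastCases with
  | last => rw [lucasTuple_castSucc_last]; exact pow_pos (by omega) _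
  | cast j =>
    rw [lucasTuple_castSucc_castSucc]
    have := coeff_lucasPoly_pos (n := 2 * m + 1) (j := j) (by omega)
    have : 0 < y ^ 2 - y := by nlinarith
    positivity

theorem lucasTuple_ne_zero {m : ℕ} {y : ℤ} (hy : 1 < y) (i : Fin (m + 3)) :
    lucasTuple m y i ≠ 0 := by
  rcases eq_or_ne i (Fin.last _) with rfl | hi
  · rw [lucasTuple_last]; exact neg_ne_zero.2 (pow_ne_zero _ (by omega))
  · exact (lucasTuple_pos hy i hi).ne'

theorem exists_lucasTuple_dvd (m : ℕ) :
    ∃ C : ℕ, 0 < C ∧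
      ∀ (y : ℤ) (i : Fin (m + 3)), lucasTuple m y i ∣ C * (y * (y - 1)) ^ (2 * m + 1) := by
  refine ⟨∏ j : Fin (m + 1), (lucasPoly (2 * m + 1)).coeff j,
    prod_pos fun j _ => coeff_lucasPoly_pos (by omega), fun y i => ?_⟩
  induction i using Fin.lastCases with
  | last => rw [lucasTuple_last, neg_dvd, mul_pow]; exact (dvd_mul_right _ _).mul_left _
  | cast i =>
    induction i using Fin.lastCases with
    | last => rw [lucasTuple_castSucc_last, mul_pow]; exact (dvd_mul_left _ _).mul_left _
    | cast j =>
      rw [lucasTuple_castSucc_castSucc, show y ^ 2 - y = y * (y - 1) by ring]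
      exact mul_dvd_mul (Int.natCast_dvd_natCast.2 (dvd_prod_of_mem _ (mem_univ j)))
        (pow_dvd_pow _ (by omega))

theorem rad_eq_radical (m : ℕ) : rad m = radical m :=
  Nat.radical_eq_prod_primeFactors.symm

theorem one_le_rad (m : ℕ) : 1 ≤ rad m := by
  rw [rad_eq_radical]; exact Nat.radical_pos m

theorem rad_pow (x : ℕ) {e : ℕ} (he : e ≠ 0) : rad (x ^ e) = rad x := by
  rw [rad, rad, Nat.primeFactors_pow x he]

theorem rad_natAbs_le_of_dvd_pow {a b : ℤ} {N : ℕ} (ha : a ≠ 0) (hb : 0 < b)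
    (h : a ∣ b ^ N) :
    (rad a.natAbs : ℤ) ≤ b := by
  have hdvd : a.natAbs ∣ b.natAbs ^ N := by
    rw [← Int.natAbs_pow]; exact Int.natAbs_dvd_natAbs.2 h
  have hrad := (exists_dvd_pow_iff_radical_dvd (Int.natAbs_ne_zero.2 ha)).1 ⟨N, hdvd⟩
  have := Nat.le_of_dvd (Int.natAbs_pos.2 hb.ne') hrad
  rw [rad_eq_radical]
  omega

theorem gNorm_intCast (x : ℤ) : gNorm x = x.natAbs ^ 2 := by
  simp [gNorm, Zsqrtd.norm, Int.natAbs_mul, sq]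

theorem exists_rad_gNorm_prod_lucasTuple_le (m : ℕ) :
    ∃ C : ℕ, 0 < C ∧ ∀ k, 1 ≤ k →
      rad (gNorm (∏ i, (lucasTuple m (2 ^ k) i : GaussianInt))) ≤ C * 2 ^ k := by
  obtain ⟨C, hC, hdvd⟩ := exists_lucasTuple_dvd m
  refine ⟨2 * C, by omega, fun k hk => ?_⟩
  set y : ℤ := 2 ^ k with hy_def
  have hy : 2 ≤ y := le_self_pow₀ (by norm_num) (by omega)
  have hW : C * (y * (y - 1)) ^ (2 * m + 1) ∣ (2 * C * (y - 1)) ^ ((2 * m + 1) * k) := by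
    rw [show C * (y * (y - 1)) ^ (2 * m + 1) = 2 ^ ((2 * m + 1) * k) * C * (y - 1) ^ (2 * m + 1) by
      rw [mul_pow, hy_def, ← pow_mul, mul_comm k]; ring, mul_pow, mul_pow]
    exact mul_dvd_mul (mul_dvd_mul dvd_rfl (dvd_pow_self _ (by positivity)))
      (pow_dvd_pow _ (Nat.le_mul_of_pos_right _ hk))
  have hP : ∏ i, lucasTuple m y i ∣ (2 * C * (y - 1)) ^ ((2 * m + 1) * k * (m + 3)) := by
    rw [pow_mul]
    exact (prod_dvd_prod_of_dvd _ _ fun i _ => hdvd y i).trans (by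
      rw [prod_const, card_univ, Fintype.card_fin]; exact pow_dvd_pow_of_dvd hW _)
  have := rad_natAbs_le_of_dvd_pow (prod_ne_zero_iff.2 fun i _ => lucasTuple_ne_zero (by omega) i)
    (mul_pos (by omega) (by omega)) hP
  rw [← Int.cast_prod, gNorm_intCast, rad_pow _ two_ne_zero]
  zify
  nlinarith

theorem pow_le_sup_gNorm_lucasTuple (m : ℕ) (y : ℤ) :
    y.natAbs ^ (4 * m + 2) ≤ univ.sup fun i => gNorm (lucasTuple m y i : GaussianInt) :=
  le_sup_of_le (mem_univ (Fin.last _)) <| by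
    rw [lucasTuple_last, gNorm_intCast, Int.natAbs_neg, Int.natAbs_pow, ← pow_mul]
    exact le_of_eq (by ring)

open Real in
theorem sub_mul_log_le_log {q : ℕ} {ε D x R S : ℝ} (hε : 0 ≤ ε) (hD : 1 ≤ D)
    (hx : 1 ≤ x) (hR : 1 ≤ R) (hRD : R ≤ D * x) (hS : x ^ q ≤ S)
    (hDx : q * log D ≤ ε * log x) :
    (q - ε) * log R ≤ log S := by
  have hlogS : q * log x ≤ log S := by
    rw [← log_pow]; exact log_le_log (by positivity) hS
  rcases le_or_gt (q - ε) 0 with hq | hq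
  · nlinarith [log_nonneg hR, log_nonneg hx]
  · calc (q - ε) * log R ≤ (q - ε) * (log D + log x) := by
          rw [← log_mul (by positivity) (by positivity)]
          exact mul_le_mul_of_nonneg_left (log_le_log (by positivity) hRD) hq.le
      _ ≤ q * log x := by nlinarith [log_nonneg hD]
      _ ≤ log S := hlogS

/-- `Q_{A(ℤ[i],n)} ≥ 4n - 10` for every `n ≥ 3`. -/
theorem quality_A_gaussian_ge (n : ℕ) (hn : 3 ≤ n) (ε : ℝ) (hε : 0 < ε) (B : ℝ) :
    ∃ a : Fin n → GaussianInt,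
      (∀ i, a i ≠ 0) ∧
      (∑ i, a i = 0) ∧
      (¬ ∃ b : Fin n → ℤ, (∀ i, b i = 0 ∨ b i = 1) ∧
        (∃ i, b i = 0) ∧ (∃ j, b j = 1) ∧ (∑ i, (b i : GaussianInt) * a i) = 0) ∧
      (∃ u : Fin n → GaussianInt, (∑ i, u i * a i) = 1) ∧
      B < ((Finset.univ.sup fun i => gNorm (a i) : ℕ) : ℝ) ∧
      (4 * (n : ℝ) - 10 - ε) * Real.log (rad (gNorm (∏ i, a i))) ≤
        Real.log ((Finset.univ.sup fun i => gNorm (a i) : ℕ)) := by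
  obtain ⟨m, rfl⟩ : ∃ m, n = m + 3 := ⟨n - 3, by omega⟩
  obtain ⟨C, hC, hrad⟩ := exists_rad_gNorm_prod_lucasTuple_le m
  have hlog : Tendsto (fun k : ℕ => ε * Real.log (2 ^ k)) atTop atTop := by
    simpa only [Real.log_pow] using
      (tendsto_natCast_atTop_atTop.atTop_mul_const (Real.log_pos one_lt_two)).const_mul_atTop hε
  obtain ⟨k, hk, hkB, hkC⟩ := ((eventually_ge_atTop 1).and
    (((tendsto_pow_atTop_atTop_of_one_lt one_lt_two).eventually_gt_atTop B).and
      (hlog.eventually_ge_atTop ((4 * m + 2 : ℕ) * Real.log C)))).exists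
  have hy : (1 : ℤ) < 2 ^ k := one_lt_pow₀ one_lt_two (by omega)
  have hS : ((2 : ℝ) ^ k) ^ (4 * m + 2) ≤
      ((univ.sup fun i => gNorm (lucasTuple m (2 ^ k) i : GaussianInt) : ℕ) : ℝ) := by
    exact_mod_cast pow_le_sup_gNorm_lucasTuple m (2 ^ k)
  refine ⟨fun i => (lucasTuple m (2 ^ k) i : GaussianInt),
    fun i => Int.cast_ne_zero.2 (lucasTuple_ne_zero hy i),
    by simp only [← Int.cast_sum, sum_lucasTuple, Int.cast_zero], ?_,
    ⟨Pi.single 0 1, by simp [Pi.single_apply, lucasTuple_zero]⟩, ?_, ?_⟩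
  · rintro ⟨b, hb, h₀, h₁, hsum⟩
    exact sum_mul_ne_zero_of_sum_eq_zero (lucasTuple_pos hy) (sum_lucasTuple m _) hb h₀ h₁
      (by simpa only [← Int.cast_mul, ← Int.cast_sum, Int.cast_eq_zero] using hsum)
  · exact hkB.trans_le ((le_self_pow₀ (one_le_pow₀ one_le_two) (by omega)).trans hS)
  · have hq : (4 * ((m + 3 : ℕ) : ℝ) - 10 - ε) = (4 * m + 2 : ℕ) - ε := by push_cast; ring
    rw [hq]
    refine sub_mul_log_le_log hε.le (by exact_mod_cast hC) (one_le_pow₀ one_le_two) ?_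
      (by rw [← Int.cast_prod]; exact_mod_cast hrad k hk) hS hkC
    exact_mod_cast one_le_rad _
end

section
/- For all Gaussian integers x and y, setting a = x² + 2xy − 2y², b = −(x² − 2xy − 2y²), c = −x² + 2i·xy − 2y², and d = −(−x² − 2i·xy − 2y²) = x² + 2i·xy + 2y², one has the identity a⁵ + b⁵ + i·c⁵ + i·d⁵ = 0 in ℤ[i]. -/
open Zsqrtd in
/-- The Elkies-style identity `a⁵ + b⁵ + i·c⁵ + i·d⁵ = 0` in the Gaussian integers,
valid for all Gaussian integers `x` and `y`. -/
theorem elkies_identity (x y : GaussianInt) :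
    (x ^ 2 + 2 * x * y - 2 * y ^ 2) ^ 5
      + (-(x ^ 2 - 2 * x * y - 2 * y ^ 2)) ^ 5
      + (sqrtd : GaussianInt) * (-x ^ 2 + 2 * sqrtd * x * y - 2 * y ^ 2) ^ 5
      + (sqrtd : GaussianInt) * (x ^ 2 + 2 * sqrtd * x * y + 2 * y ^ 2) ^ 5 = 0 := by
  have h : (sqrtd : GaussianInt) ^ 2 = -1 := by ext <;> simp [pow_two]
  linear_combination (64*x^5*y^5*(sqrtd:GaussianInt)^4 + 160*x^7*y^3*sqrtd^2
    + 576*x^5*y^5*sqrtd^2 + 640*x^3*y^7*sqrtd^2 + 20*x^9*y - 96*x^5*y^5 + 320*x*y^9) * h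
end

section
/- Let a and b be rational integers with a² − 2b² = 1, and let y = a + b·i + b·j ∈ Quaternion ℤ. Set x = y²·(−i)·y²·i. Then x = 1 + 4ab·i − 8a²b²·k; moreover x + conj(x) = 2 (i.e. Tr(x) = 2) and normSq(x) = (normSq(y))⁴. -/
/-!
Under the Pell relation the square of `y = a + b i + b j` is `z = 1 + c i + c j` with `c = 2ab`.
Conjugation by `i` flips the sign of the `j`-part, so
`x = z · (i⁻¹ z i) = (1 + c i + c j)(1 + c i - c j) = 1 + 2c i - 2c² k`; the trace is twice the
real part, and the norm follows from multiplicativity of `normSq`, since `normSq (±i) = 1`.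
-/

namespace Quaternion

variable {R : Type*} [CommRing R]

/- An anonymous constructor `⟨r, p, q, s⟩` elaborates at type `QuaternionAlgebra R (-1) 0 (-1)`
rather than `ℍ[R]`, which blocks rewriting with lemmas about it; hence the explicit equations. -/

theorem sq_eq_of_eq_mk {y : ℍ[R]} {a p q : R} (hy : y = ⟨a, p, q, 0⟩) :
    y ^ 2 = ⟨a ^ 2 - p ^ 2 - q ^ 2, 2 * a * p, 2 * a * q, 0⟩ := by
  ext <;> simp only [sq, re_mul, imI_mul, imJ_mul, imK_mul] <;> simp only [hy] <;> ring

theorem mul_neg_mul_mul_eq_of_eq_mk {i z : ℍ[R]} {r p q : R} (hi : i = ⟨0, 1, 0, 0⟩)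
    (hz : z = ⟨r, p, q, 0⟩) :
    z * (-i * z * i) = ⟨r ^ 2 - p ^ 2 + q ^ 2, 2 * r * p, 0, -(2 * p * q)⟩ := by
  ext <;> simp only [re_mul, imI_mul, imJ_mul, imK_mul, re_neg, imI_neg, imJ_neg, imK_neg] <;>
    simp only [hi, hz] <;> ring

theorem normSq_eq_one_of_eq_mk {i : ℍ[R]} (hi : i = ⟨0, 1, 0, 0⟩) : normSq i = 1 := by
  rw [normSq_def', hi]
  simp

end Quaternion

open Quaternion in
/-- For a Pell solution `a² - 2b² = 1` and `y = a + b i + b j`, the element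
`x = y²·(−i)·y²·i` equals `1 + 4ab·i − 8a²b²·k`, has trace 2, and has norm `N(y)⁴`. -/
theorem quaternion_pell_construction (a b : ℤ) (hpell : a ^ 2 - 2 * b ^ 2 = 1)
    (i y x : Quaternion ℤ) (hi : i = ⟨0, 1, 0, 0⟩) (hy : y = ⟨a, b, b, 0⟩)
    (hx : x = y ^ 2 * (-i) * y ^ 2 * i) :
    x = ⟨1, 4 * a * b, 0, -(8 * a ^ 2 * b ^ 2)⟩ ∧
    x + star x = 2 ∧
    Quaternion.normSq x = (Quaternion.normSq y) ^ 4 := by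
  have hy_sq : y ^ 2 = ⟨1, 2 * a * b, 2 * a * b, 0⟩ := by
    rw [sq_eq_of_eq_mk hy, sub_sub, ← two_mul, hpell]
  have hx_eq : x = ⟨1, 4 * a * b, 0, -(8 * a ^ 2 * b ^ 2)⟩ := by
    rw [hx, show y ^ 2 * -i * y ^ 2 * i = y ^ 2 * (-i * y ^ 2 * i) by simp only [mul_assoc],
      mul_neg_mul_mul_eq_of_eq_mk hi hy_sq]
    congr 1 <;> ring
  refine ⟨hx_eq, ?_, ?_⟩
  · rw [self_add_star, hx_eq]
    simp
  · rw [hx]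
    simp only [map_mul, map_pow, normSq_neg, normSq_eq_one_of_eq_mk hi, mul_one]
    ring
end

section
/- Define integers c(i, m) for i, m ∈ ℕ by: c(0,0) = c(0,1) = 2; c(i,0) = c(i,1) = 0 for i ≥ 1; c(0, m+2) = 2·c(0, m+1); and c(i+1, m+2) = 2·c(i+1, m+1) − c(i, m). Then for every x ∈ Quaternion ℤ with x + conj(x) = 2 and every m ∈ ℕ, one has x^m + (conj x)^m = Σ_{i=0}^{⌊m/2⌋} c(i, m)·(normSq x)^i, where the right-hand side is a central scalar in Quaternion ℤ. -/
/-- The coefficients `c_{i,m}` of the paper, defined by the recursion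
`c(0,0) = c(0,1) = 2`, `c(i,0) = c(i,1) = 0` for `i ≥ 1`, `c(0, m+2) = 2·c(0, m+1)` and
`c(i+1, m+2) = 2·c(i+1, m+1) − c(i, m)`. -/
def c : ℕ → ℕ → ℤ
  | 0, 0 => 2
  | 0, 1 => 2
  | _ + 1, 0 => 0
  | _ + 1, 1 => 0
  | 0, m + 2 => 2 * c 0 (m + 1)
  | i + 1, m + 2 => 2 * c (i + 1) (m + 1) - c i m
termination_by i m => m

lemma c_eq_zero : ∀ m i, m < 2 * i → c i m = 0 := by
  intro m
  induction m using Nat.twoStepInduction with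
  | zero =>
      rintro (_ | i) h
      · omega
      · simp [c]
  | one =>
      rintro (_ | i) h
      · omega
      · simp [c]
  | more m ih1 ih2 =>
      rintro (_ | i) h
      · omega
      · have : c (i + 1) (m + 2) = 2 * c (i + 1) (m + 1) - c i m := by rw [c]
        rw [this, ih2 (i + 1) (by omega), ih1 i (by omega)]
        ring

def S (N : ℤ) (m : ℕ) : ℤ :=
  ∑ i ∈ Finset.range (m / 2 + 1), c i m * N ^ i

lemma S_succ_ext (N : ℤ) (m : ℕ) :
    S N (m + 1) = ∑ i ∈ Finset.range (m / 2 + 2), c i (m + 1) * N ^ i := by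
  rw [S]
  refine Finset.sum_subset (Finset.range_subset_range.2 (by omega)) ?_
  intro i hi hni
  simp only [Finset.mem_range] at hi hni
  rw [c_eq_zero (m + 1) i (by omega), zero_mul]

lemma S_rec (N : ℤ) (m : ℕ) : S N (m + 2) = 2 * S N (m + 1) - N * S N m := by
  have h2 : (m + 2) / 2 + 1 = m / 2 + 1 + 1 := by omega
  have L : S N (m + 2)
      = (∑ i ∈ Finset.range (m / 2 + 1),
          (2 * c (i + 1) (m + 1) - c i m) * N ^ (i + 1)) + 2 * c 0 (m + 1) := by
    rw [S, h2, Finset.sum_range_succ']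
    have hc0 : c 0 (m + 2) = 2 * c 0 (m + 1) := by rw [c]
    have hc : ∀ i, c (i + 1) (m + 2) = 2 * c (i + 1) (m + 1) - c i m := fun i => by rw [c]
    simp only [hc, hc0, pow_zero, mul_one]
  have R1 : S N (m + 1)
      = (∑ i ∈ Finset.range (m / 2 + 1), c (i + 1) (m + 1) * N ^ (i + 1)) + c 0 (m + 1) := by
    rw [S_succ_ext, Finset.sum_range_succ']
    simp
  have R2 : N * S N m = ∑ i ∈ Finset.range (m / 2 + 1), c i m * N ^ (i + 1) := by
    rw [S, Finset.mul_sum]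
    exact Finset.sum_congr rfl fun i _ => by ring
  have E : (∑ i ∈ Finset.range (m / 2 + 1), (2 * c (i + 1) (m + 1) - c i m) * N ^ (i + 1))
      = 2 * (∑ i ∈ Finset.range (m / 2 + 1), c (i + 1) (m + 1) * N ^ (i + 1))
        - ∑ i ∈ Finset.range (m / 2 + 1), c i m * N ^ (i + 1) := by
    rw [Finset.mul_sum, ← Finset.sum_sub_distrib]
    exact Finset.sum_congr rfl fun i _ => by ring
  rw [L, R1, R2, E]
  ring

/-- For any quaternion `x` of trace 2, `x^m + x̄^m` is the central scalar
`Σ_{i=0}^{⌊m/2⌋} c(i,m)·N(x)^i`. -/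
theorem pow_add_pow_star_eq_sum (x : Quaternion ℤ) (hx : x + star x = 2) (m : ℕ) :
    x ^ m + (star x) ^ m
      = (((∑ i ∈ Finset.range (m / 2 + 1), c i m * (Quaternion.normSq x) ^ i) : ℤ)
        : Quaternion ℤ) := by
  set N : ℤ := Quaternion.normSq x with hN
  have hy : star x = 2 - x := eq_sub_of_add_eq' hx
  have hxx : x = 2 - star x := eq_sub_of_add_eq hx
  have hx2 : x ^ 2 = 2 * x - (N : Quaternion ℤ) := by
    have h0 := Quaternion.self_mul_star x
    rw [hy, mul_sub, mul_two] at h0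
    have h : x + x - x * x = ((N : ℤ) : Quaternion ℤ) := h0
    rw [pow_two, two_mul, eq_sub_iff_add_eq, ← h]
    abel
  have hy2 : (star x) ^ 2 = 2 * (star x) - (N : Quaternion ℤ) := by
    have h : star x * (2 - star x) = (N : Quaternion ℤ) := by
      rw [← hxx]; exact Quaternion.star_mul_self x
    rw [mul_sub, mul_two] at h
    rw [pow_two, two_mul, eq_sub_iff_add_eq, ← h]
    abel
  have hstep : ∀ z : Quaternion ℤ, z ^ 2 = 2 * z - (N : Quaternion ℤ) →
      ∀ k, z ^ (k + 2) = 2 * z ^ (k + 1) - (N : Quaternion ℤ) * z ^ k := by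
    intro z hz k
    rw [pow_add, hz, (Int.cast_commute N (z ^ k)).eq]
    noncomm_ring
  have key : ∀ k, x ^ k + (star x) ^ k = ((S N k : ℤ) : Quaternion ℤ) := by
    intro k
    induction k using Nat.twoStepInduction with
    | zero => simp [S, c]; norm_num
    | one => simp [S, c, pow_one]; rw [hx]
    | more k ih1 ih2 =>
        have h3 : x ^ (k + 2) + (star x) ^ (k + 2)
            = 2 * (x ^ k.succ + (star x) ^ k.succ)
              - (N : Quaternion ℤ) * (x ^ k + (star x) ^ k) := by
          rw [hstep x hx2 k, hstep (star x) hy2 k, mul_add, mul_add]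
          abel
        rw [h3, ih2, ih1, S_rec]
        push_cast
        ring_nf
  exact key m
end
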